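/- arXiv:math/0603488 — 5 statements merged into one kernel-verified Lean document; each statement's English description precedes it below -/
import Mathlib

section
/- For every prime p ≥ 5, (-1)^((p-1)/2) * C(p-1, (p-1)/2) ≡ 4^(p-1) (mod p^3). -/
/-!
Write `p = 2m + 1`. Pairing the factors `p - (2i+1)` (the even numbers up to `2m`) with
`p + (2i+1)` (the even numbers from `2m + 2` to `4m`) gives the exact identity
`C(2m, m) * ∏_{i<m} (p² - (2i+1)²) = 16^m * ∏_{i<m} (2i+1)²`.
Since `p⁴ ≡ 0 mod p³`, the product on the left is `(-1)^m ∏ (2i+1)² (1 - p² ∑ (2i+1)⁻²)`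
modulo `p³`, and `∑_{i<m} (2i+1)⁻² ≡ 0 mod p`: the odd residues and their negatives are all the
nonzero residues, and `∑_{x ∈ 𝔽_p} x⁻² = ∑_{x ∈ 𝔽_p} x² = 0` for `p ≥ 5`. Cancelling the unit
`∏ (2i+1)²` leaves `(-1)^m C(2m, m) ≡ 16^m`.
-/

open Finset Nat

theorem Finset.sum_range_two_mul {M : Type*} [AddCommMonoid M] (f : ℕ → M) (m : ℕ) :
    ∑ n ∈ range (2 * m), f n = ∑ i ∈ range m, (f (2 * i) + f (2 * i + 1)) := by
  induction m with
  | zero => simp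
  | succ m ih =>
    rw [show 2 * (m + 1) = 2 * m + 1 + 1 by ring, sum_range_succ, sum_range_succ, ih,
      sum_range_succ, add_assoc]

theorem Finset.prod_sub_eq_of_mul_self_eq_zero {ι R : Type*} [CommRing R]
    {t : R} (ht : t * t = 0) (s : Finset ι) {a b : ι → R} (hab : ∀ i ∈ s, a i * b i = 1) :
    ∏ i ∈ s, (t - a i) = (∏ i ∈ s, -a i) * (1 - t * ∑ i ∈ s, b i) := by
  induction s using Finset.cons_induction with
  | empty => simp
  | cons j s hj ih =>
    rw [prod_cons, prod_cons, sum_cons, ih fun i hi ↦ hab i (mem_cons_of_mem hi)]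
    linear_combination (∏ i ∈ s, -a i) * (-t * hab j (mem_cons_self j s) - (∑ i ∈ s, b i) * ht)

theorem Nat.centralBinom_mul_factorial (m : ℕ) :
    centralBinom m * m ! = 2 ^ m * ∏ i ∈ range m, (2 * i + 1) := by
  induction m with
  | zero => simp
  | succ m ih =>
    calc centralBinom (m + 1) * (m + 1)! = ((m + 1) * centralBinom (m + 1)) * m ! := by
          rw [factorial_succ]; ring
      _ = 2 * (2 * m + 1) * (centralBinom m * m !) := by rw [succ_mul_centralBinom_succ]; ring
      _ = 2 ^ (m + 1) * ∏ i ∈ range (m + 1), (2 * i + 1) := by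
          rw [ih, prod_range_succ]; ring

theorem prod_range_sq_sub_odd_sq (R : Type*) [CommRing R] (m : ℕ) :
    ∏ i ∈ range m, (((2 * m + 1 : ℕ) : R) ^ 2 - ((2 * i + 1 : ℕ) : R) ^ 2)
      = 4 ^ m * (2 * m)! := by
  have hfactor : ∀ i ∈ range m, ((2 * m + 1 : ℕ) : R) ^ 2 - ((2 * i + 1 : ℕ) : R) ^ 2
      = 4 * (((m - i) * (m + 1 + i) : ℕ) : R) := by
    intro i hi
    push_cast [Nat.cast_sub (mem_range.1 hi).le]
    ring
  rw [prod_congr rfl hfactor, prod_mul_distrib, prod_const, card_range, ← Nat.cast_prod,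
    prod_mul_distrib, ← descFactorial_eq_prod_range, ← ascFactorial_eq_prod_range,
    descFactorial_self, factorial_mul_ascFactorial, two_mul]

theorem centralBinom_mul_prod_sq_sub_odd_sq (R : Type*) [CommRing R] (m : ℕ) :
    (centralBinom m : R) *
        ∏ i ∈ range m, (((2 * m + 1 : ℕ) : R) ^ 2 - ((2 * i + 1 : ℕ) : R) ^ 2)
      = 16 ^ m * ∏ i ∈ range m, ((2 * i + 1 : ℕ) : R) ^ 2 := by
  have hfact : (2 * m)! = centralBinom m * m ! * m ! := by
    rw [centralBinom_eq_two_mul_choose, two_mul, add_choose_mul_factorial_mul_factorial]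
  have hnat :
      centralBinom m * (4 ^ m * (2 * m)!) = 16 ^ m * (∏ i ∈ range m, (2 * i + 1)) ^ 2 :=
    calc centralBinom m * (4 ^ m * (2 * m)!) = 4 ^ m * (centralBinom m * m !) ^ 2 := by
          rw [hfact]; ring
      _ = 16 ^ m * (∏ i ∈ range m, (2 * i + 1)) ^ 2 := by
          rw [centralBinom_mul_factorial, mul_pow, ← pow_mul, mul_comm m 2, pow_mul, ← mul_assoc,
            ← mul_pow]
          norm_num
  rw [prod_range_sq_sub_odd_sq, prod_pow]
  exact_mod_cast congrArg (Nat.cast : ℕ → R) hnat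

theorem ZMod.sum_eq_add_two_nsmul_sum_odd {M : Type*} [AddCommMonoid M] (m : ℕ)
    {f : ZMod (2 * m + 1) → M} (hf : ∀ x, f (-x) = f x) :
    ∑ x, f x = f 0 + 2 • ∑ i ∈ range m, f (2 * i + 1 : ℕ) := by
  have hreflect : ∑ i ∈ range m, f (2 * i + 2 : ℕ) = ∑ i ∈ range m, f (2 * i + 1 : ℕ) := by
    rw [← sum_range_reflect (fun i ↦ f (2 * i + 1 : ℕ)) m]
    refine sum_congr rfl fun i hi ↦ ?_
    rw [← hf]
    congr 1
    rw [neg_eq_iff_add_eq_zero, ← Nat.cast_add,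
      show 2 * i + 2 + (2 * (m - 1 - i) + 1) = 2 * m + 1 by have := mem_range.1 hi; omega,
      ZMod.natCast_self]
  calc ∑ x, f x = ∑ n ∈ range (2 * m + 1), f n := by
        rw [← Fin.sum_univ_eq_sum_range]
        exact Fintype.sum_congr _ _ fun x ↦ congrArg f (ZMod.natCast_zmod_val x).symm
    _ = f 0 + ∑ i ∈ range m, (f (2 * i + 1 : ℕ) + f (2 * i + 2 : ℕ)) := by
        rw [sum_range_succ', sum_range_two_mul, add_comm, Nat.cast_zero]
    _ = f 0 + 2 • ∑ i ∈ range m, f (2 * i + 1 : ℕ) := by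
        rw [sum_add_distrib, hreflect, two_nsmul]

theorem ZMod.sum_range_inv_odd_pow_eq_zero {p m k : ℕ} [Fact p.Prime] (hpm : p = 2 * m + 1)
    (hk : k ≠ 0) (hkm : k < m) : ∑ i ∈ range m, ((2 * i + 1 : ℕ) : ZMod p)⁻¹ ^ (2 * k) = 0 := by
  subst hpm
  have htotal : ∑ x : ZMod (2 * m + 1), x⁻¹ ^ (2 * k) = 0 := by
    refine (Fintype.sum_equiv (Equiv.inv _) _ (· ^ (2 * k)) fun _ ↦ rfl).trans ?_
    exact FiniteField.sum_pow_lt_card_sub_one _ _ (by rw [ZMod.card]; omega)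
  rw [ZMod.sum_eq_add_two_nsmul_sum_odd m fun x ↦ by rw [inv_neg, (even_two_mul k).neg_pow],
    inv_zero, zero_pow (by omega), zero_add, nsmul_eq_mul] at htotal
  have htwo : (2 : ZMod (2 * m + 1)) ≠ 0 := by
    have : ((2 : ℕ) : ZMod (2 * m + 1)) ≠ 0 := by
      rw [ne_eq, ZMod.natCast_eq_zero_iff]
      exact Nat.not_dvd_of_pos_of_lt two_pos (by omega)
    exact_mod_cast this
  exact (mul_eq_zero.1 htotal).resolve_left htwo

theorem ZMod.natCast_mul_eq_zero_of_cast_eq_zero {a b n : ℕ} [NeZero n] (hab : a * b = n)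
    {x : ZMod n} (hx : (x.cast : ZMod a) = 0) : (b : ZMod n) * x = 0 := by
  rw [← ZMod.natCast_val, ZMod.natCast_eq_zero_iff] at hx
  obtain ⟨c, hc⟩ := hx
  rw [← ZMod.natCast_zmod_val x, hc, ← Nat.cast_mul, ← mul_assoc, mul_comm b, hab,
    Nat.cast_mul, ZMod.natCast_self, zero_mul]

theorem ZMod.isUnit_natCast_of_lt_prime {p n : ℕ} (k : ℕ) (hp : p.Prime) (hn : n ≠ 0)
    (hnp : n < p) : IsUnit (n : ZMod (p ^ k)) :=
  (ZMod.isUnit_iff_coprime n (p ^ k)).2 ((Nat.coprime_of_lt_prime hn hnp hp).symm.pow_right k)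

theorem ZMod.prod_sq_sub_odd_sq {p m : ℕ} [hp : Fact p.Prime] (hpm : p = 2 * m + 1)
    (hm : 1 < m) :
    ∏ i ∈ range m, ((p : ZMod (p ^ 3)) ^ 2 - ((2 * i + 1 : ℕ) : ZMod (p ^ 3)) ^ 2)
      = (-1) ^ m * ∏ i ∈ range m, ((2 * i + 1 : ℕ) : ZMod (p ^ 3)) ^ 2 := by
  have hinv : ∀ i ∈ range m,
      ((2 * i + 1 : ℕ) : ZMod (p ^ 3)) * ((2 * i + 1 : ℕ) : ZMod (p ^ 3))⁻¹ = 1 := fun i hi ↦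
    ZMod.mul_inv_of_unit _ <|
      isUnit_natCast_of_lt_prime 3 hp.out (by omega) (by have := mem_range.1 hi; omega)
  have hp4 : (p : ZMod (p ^ 3)) ^ 2 * (p : ZMod (p ^ 3)) ^ 2 = 0 := by
    rw [show (p : ZMod (p ^ 3)) ^ 2 * (p : ZMod (p ^ 3)) ^ 2
        = ((p ^ 3 : ℕ) : ZMod (p ^ 3)) * p by push_cast; ring, ZMod.natCast_self, zero_mul]
  have hsum : (p : ZMod (p ^ 3)) ^ 2 * ∑ i ∈ range m, ((2 * i + 1 : ℕ) : ZMod (p ^ 3))⁻¹ ^ 2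
      = 0 := by
    set ψ := ZMod.castHom (dvd_pow_self p three_ne_zero) (ZMod p)
    have hψ : ∀ i ∈ range m,
        ψ ((2 * i + 1 : ℕ) : ZMod (p ^ 3))⁻¹ = ((2 * i + 1 : ℕ) : ZMod p)⁻¹ := fun i hi ↦
      eq_inv_of_mul_eq_one_right <| by rw [← map_natCast ψ, ← map_mul, hinv i hi, map_one]
    rw [← Nat.cast_pow]
    refine ZMod.natCast_mul_eq_zero_of_cast_eq_zero (a := p) (by ring) ?_
    rw [← ZMod.castHom_apply (h := dvd_pow_self p three_ne_zero), map_sum,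
      sum_congr rfl fun i hi ↦ by rw [map_pow, hψ i hi]]
    exact ZMod.sum_range_inv_odd_pow_eq_zero hpm one_ne_zero hm
  rw [prod_sub_eq_of_mul_self_eq_zero hp4 _ fun i hi ↦ by rw [← mul_pow, hinv i hi, one_pow],
    hsum, sub_zero, mul_one, prod_neg, card_range]

theorem morley_congruence (p : ℕ) (hp : p.Prime) (h5 : 5 ≤ p) :
    ((-1 : ℤ) ^ ((p - 1) / 2) * ((p - 1).choose ((p - 1) / 2)) : ℤ)
      ≡ 4 ^ (p - 1) [ZMOD (p : ℤ) ^ 3] := by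
  have := Fact.mk hp
  obtain ⟨m, hpm⟩ := hp.odd_of_ne_two (by omega)
  have hunit : IsUnit (∏ i ∈ range m, ((2 * i + 1 : ℕ) : ZMod (p ^ 3)) ^ 2) :=
    IsUnit.prod_iff.2 fun i hi ↦ (ZMod.isUnit_natCast_of_lt_prime 3 hp (by omega)
      (by have := mem_range.1 hi; omega)).pow 2
  have hbinom := centralBinom_mul_prod_sq_sub_odd_sq (ZMod (p ^ 3)) m
  rw [← hpm] at hbinom
  rw [show (p - 1) / 2 = m by omega, show p - 1 = 2 * m by omega,
    ← centralBinom_eq_two_mul_choose, show (p : ℤ) ^ 3 = ((p ^ 3 : ℕ) : ℤ) by push_cast; rfl,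
    ← ZMod.intCast_eq_intCast_iff]
  push_cast
  refine hunit.mul_right_cancel ?_
  calc (-1) ^ m * (centralBinom m : ZMod (p ^ 3)) *
        ∏ i ∈ range m, ((2 * i + 1 : ℕ) : ZMod (p ^ 3)) ^ 2
      = (centralBinom m : ZMod (p ^ 3)) *
          ∏ i ∈ range m, ((p : ZMod (p ^ 3)) ^ 2 - ((2 * i + 1 : ℕ) : ZMod (p ^ 3)) ^ 2) := by
        rw [ZMod.prod_sq_sub_odd_sq hpm (by omega)]; ring
    _ = 4 ^ (2 * m) * ∏ i ∈ range m, ((2 * i + 1 : ℕ) : ZMod (p ^ 3)) ^ 2 := by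
        rw [hbinom, pow_mul]; norm_num
end

section
/- For every prime p ≥ 5 and every positive integer a, Σ_{k=0}^{p-1} (-1)^{(a-1)k} C(p-1,k)^a ≡ 2^{a(p-1)} (mod p^3). -/
open Finset

lemma pow_expand {R : Type*} [CommRing R] (y : R) (hy : y^3 = 0) :
    ∀ a : ℕ, (1 + y)^a = 1 + (a:R)*y + ((a.choose 2 : ℕ):R)*y^2 := by
  intro a
  induction a with
  | zero => simp
  | succ a ih =>
    have h2 : ((a+1).choose 2 : ℕ) = a.choose 2 + a := by
      rw [show (2:ℕ) = 1 + 1 from rfl, Nat.choose_succ_succ, Nat.choose_one_right]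
      ring
    have key : (1 + (a:R)*y + ((a.choose 2 : ℕ):R)*y^2) * (1+y)
        = 1 + ((a:R)+1)*y + (((a.choose 2:ℕ):R) + (a:R))*y^2 + ((a.choose 2:ℕ):R)*y^3 := by
      ring
    rw [pow_succ, ih, key, hy, h2]
    push_cast
    ring

lemma tri_swap {M : Type*} [AddCommMonoid M] (g : ℕ → ℕ → M) :
    ∀ n, ∑ b ∈ range n, ∑ c ∈ range (n - b), g b c
       = ∑ s ∈ range n, ∑ b ∈ range (s+1), g b (s - b) := by
  intro n
  induction n with
  | zero => simp
  | succ n ih =>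
    have step : ∀ b ∈ range (n+1), ∑ c ∈ range (n+1-b), g b c
        = (∑ c ∈ range (n-b), g b c) + g b (n-b) := by
      intro b hb
      have hb' := Finset.mem_range.mp hb
      rw [show n+1-b = (n-b)+1 by omega, Finset.sum_range_succ]
    rw [Finset.sum_congr rfl step, Finset.sum_add_distrib, Finset.sum_range_succ
      (fun b => ∑ c ∈ range (n-b), g b c)]
    simp only [Nat.sub_self, Finset.range_zero, Finset.sum_empty, add_zero]
    rw [ih, Finset.sum_range_succ (fun s => ∑ b ∈ range (s+1), g b (s-b))]

lemma parity_swap {M : Type*} [CommRing M] (c : ℕ → M) :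
    ∀ n, ∑ k ∈ range (2*n+1), (-1:M)^k * ∑ j ∈ range k, c j = ∑ b ∈ range n, c (2*b+1) := by
  intro n
  induction n with
  | zero => simp
  | succ n ih =>
    rw [show 2*(n+1)+1 = (2*n+1)+1+1 by ring, Finset.sum_range_succ, Finset.sum_range_succ, ih,
      Finset.sum_range_succ c (2*n+1), Finset.sum_range_succ (fun b => c (2*b+1))]
    have h1 : (-1:M)^(2*n+1) = -1 := Odd.neg_one_pow ⟨n, by ring⟩
    have h2 : (-1:M)^(2*n+1+1) = 1 := Even.neg_one_pow ⟨n+1, by ring⟩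
    rw [h1, h2]
    ring

lemma sq_sum_lemma {M : Type*} [CommRing M] (x : ℕ → M) :
    ∀ n, ∑ b ∈ range n, (2 * x b * (∑ c ∈ range b, x c) + (x b)^2) = (∑ b ∈ range n, x b)^2 := by
  intro n
  induction n with
  | zero => simp
  | succ n ih =>
    rw [Finset.sum_range_succ, ih, Finset.sum_range_succ (fun b => x b)]
    ring

open Finset

noncomputable def hF (p k : ℕ) : ZMod p := ∑ j ∈ range k, ((j+1:ℕ) : ZMod p)⁻¹
noncomputable def oF (p b : ℕ) : ZMod p := ∑ c ∈ range b, ((2*c+1:ℕ) : ZMod p)⁻¹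
noncomputable def eF (p b : ℕ) : ZMod p := ∑ c ∈ range b, ((2*c+2:ℕ) : ZMod p)⁻¹
noncomputable def tF (p n : ℕ) : ZMod p := ∑ b ∈ range n, ((2*b+2:ℕ) : ZMod p)⁻¹ * oF p (b+1)

lemma cg_cast_ne (p m : ℕ) [NeZero p] (h1 : 0 < m) (h2 : m < p) : ((m:ℕ) : ZMod p) ≠ 0 := by
  intro h
  have hd := (ZMod.natCast_eq_zero_iff m p).mp h
  have := Nat.le_of_dvd h1 hd
  omega

lemma pf_lemma {F : Type*} [Field F] (α β : F) (ha : α ≠ 0) (hb : β ≠ 0) (hc : α + β ≠ 0) :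
    α⁻¹ * β⁻¹ = (α+β)⁻¹ * (α⁻¹ + β⁻¹) := by
  field_simp
  ring

lemma tF_eq_zero (p n : ℕ) (hp : p.Prime) (hn : p = 2*n+1) (h5 : 5 ≤ p) : tF p n = 0 := by
  haveI : Fact p.Prime := ⟨hp⟩
  set T2 : ZMod p := ∑ b ∈ range n, ((2*b+1:ℕ) : ZMod p)⁻¹ * oF p (n-b) with hT2
  -- Step 1 : tF = -T2
  have h1 : tF p n = -T2 := by
    rw [tF, ← Finset.sum_range_reflect]
    rw [hT2, ← Finset.sum_neg_distrib]
    apply Finset.sum_congr rfl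
    intro b hb
    have hb' := Finset.mem_range.mp hb
    rw [show 2*(n-1-b)+2 = 2*n-2*b by omega, show n-1-b+1 = n-b by omega]
    have hadd : ((2*n-2*b:ℕ) : ZMod p) + ((2*b+1:ℕ) : ZMod p) = 0 := by
      rw [← Nat.cast_add, show 2*n-2*b+(2*b+1) = p by omega]
      exact ZMod.natCast_self p
    have hneg : ((2*n-2*b:ℕ) : ZMod p) = -((2*b+1:ℕ) : ZMod p) :=
      eq_neg_of_add_eq_zero_left hadd
    rw [hneg, inv_neg]
    ring
  -- Step 2 : T2 = 2 * tF
  have h2 : T2 = 2 * tF p n := by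
    have hexp : T2 = ∑ b ∈ range n, ∑ c ∈ range (n-b),
        ((2*b+1:ℕ) : ZMod p)⁻¹ * ((2*c+1:ℕ) : ZMod p)⁻¹ := by
      rw [hT2]
      apply Finset.sum_congr rfl
      intro b _
      rw [oF, Finset.mul_sum]
    rw [hexp, tri_swap]
    rw [tF, Finset.mul_sum]
    apply Finset.sum_congr rfl
    intro s hs
    have hs' := Finset.mem_range.mp hs
    have key : ∀ b ∈ range (s+1),
        ((2*b+1:ℕ) : ZMod p)⁻¹ * ((2*(s-b)+1:ℕ) : ZMod p)⁻¹
        = ((2*s+2:ℕ) : ZMod p)⁻¹ * (((2*b+1:ℕ) : ZMod p)⁻¹ + ((2*(s-b)+1:ℕ) : ZMod p)⁻¹) := by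
      intro b hb
      have hb' := Finset.mem_range.mp hb
      have ha : ((2*b+1:ℕ) : ZMod p) ≠ 0 := cg_cast_ne p _ (by omega) (by omega)
      have hbb : ((2*(s-b)+1:ℕ) : ZMod p) ≠ 0 := cg_cast_ne p _ (by omega) (by omega)
      have hsum : ((2*s+2:ℕ) : ZMod p) = ((2*b+1:ℕ) : ZMod p) + ((2*(s-b)+1:ℕ) : ZMod p) := by
        rw [← Nat.cast_add, show (2*b+1) + (2*(s-b)+1) = 2*s+2 by omega]
      have hc : ((2*s+2:ℕ) : ZMod p) ≠ 0 := cg_cast_ne p _ (by omega) (by omega)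
      rw [hsum] at hc
      rw [hsum]
      exact pf_lemma _ _ ha hbb hc
    rw [Finset.sum_congr rfl key, ← Finset.mul_sum, Finset.sum_add_distrib]
    have hrefl : ∑ b ∈ range (s+1), ((2*(s-b)+1:ℕ) : ZMod p)⁻¹
        = ∑ b ∈ range (s+1), ((2*b+1:ℕ) : ZMod p)⁻¹ := by
      have := Finset.sum_range_reflect (fun b => ((2*b+1:ℕ) : ZMod p)⁻¹) (s+1)
      simpa [show ∀ b, s+1-1-b = s-b from fun b => by omega] using this
    rw [hrefl, oF]
    ring
  -- conclude 3 T = 0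
  have h3 : (3 : ZMod p) * tF p n = 0 := by
    have h4 : tF p n = -(2 * tF p n) := by rw [← h2, ← h1]
    linear_combination h4
  have h3ne : (3 : ZMod p) ≠ 0 := by
    have := cg_cast_ne p 3 (by omega) (by omega)
    simpa using this
  rcases mul_eq_zero.mp h3 with h | h
  · exact absurd h h3ne
  · exact h

lemma hF_succ (p m : ℕ) : hF p (m+1) = hF p m + ((m+1:ℕ) : ZMod p)⁻¹ := by
  simp only [hF]; rw [Finset.sum_range_succ]

lemma oF_succ (p b : ℕ) : oF p (b+1) = oF p b + ((2*b+1:ℕ) : ZMod p)⁻¹ := by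
  simp only [oF]; rw [Finset.sum_range_succ]

lemma eF_succ (p b : ℕ) : eF p (b+1) = eF p b + ((2*b+2:ℕ) : ZMod p)⁻¹ := by
  simp only [eF]; rw [Finset.sum_range_succ]

lemma hF_odd (p : ℕ) : ∀ b, hF p (2*b+1) = oF p (b+1) + eF p b := by
  intro b
  induction b with
  | zero =>
    rw [show 2*0+1 = 0+1 by ring, hF_succ, oF_succ]
    simp [hF, oF, eF]
  | succ b ih =>
    rw [show 2*(b+1)+1 = ((2*b+1)+1)+1 by ring, hF_succ, hF_succ, ih, oF_succ p (b+1), eF_succ p b]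
    push_cast
    ring_nf

lemma BF_eq (p n : ℕ) (hp : p.Prime) (hn : p = 2*n+1) :
    ∑ k ∈ range p, (-1 : ZMod p)^k * (hF p k)^2 = 2 * tF p n + (eF p n)^2 := by
  haveI : Fact p.Prime := ⟨hp⟩
  subst hn
  set p := 2*n+1 with hp'
  have htel : ∀ k, (hF p k)^2 = ∑ j ∈ range k, ((hF p (j+1))^2 - (hF p j)^2) := by
    intro k
    rw [Finset.sum_range_sub (fun j => (hF p j)^2)]
    simp [hF]
  calc ∑ k ∈ range (2*n+1), (-1 : ZMod p)^k * (hF p k)^2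
      = ∑ k ∈ range (2*n+1), (-1 : ZMod p)^k
          * ∑ j ∈ range k, ((hF p (j+1))^2 - (hF p j)^2) :=
        Finset.sum_congr rfl fun k _ => by rw [← htel k]
    _ = ∑ b ∈ range n, ((hF p (2*b+1+1))^2 - (hF p (2*b+1))^2) :=
        parity_swap (fun j => (hF p (j+1))^2 - (hF p j)^2) n
    _ = ∑ b ∈ range n, (2 * (((2*b+2:ℕ) : ZMod p)⁻¹) * oF p (b+1)
          + (2 * (((2*b+2:ℕ) : ZMod p)⁻¹) * (∑ c ∈ range b, ((2*c+2:ℕ) : ZMod p)⁻¹)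
             + (((2*b+2:ℕ) : ZMod p)⁻¹)^2)) := by
        apply Finset.sum_congr rfl
        intro b _
        rw [hF_succ p (2*b+1), hF_odd p b]
        simp only [eF]
        rw [show (2*b+1+1 : ℕ) = 2*b+2 by ring]
        ring
    _ = 2 * tF p n + (eF p n)^2 := by
        rw [Finset.sum_add_distrib]
        congr 1
        · rw [tF, Finset.mul_sum]
          apply Finset.sum_congr rfl
          intro b _
          ring
        · have := sq_sum_lemma (fun b => ((2*b+2:ℕ) : ZMod p)⁻¹) n
          simp only [eF]
          simpa using this

lemma AF_eq (p n : ℕ) (hn : p = 2*n+1) :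
    ∑ k ∈ range p, (-1 : ZMod p)^k * hF p k = eF p n := by
  subst hn
  set p := 2*n+1 with hp'
  calc ∑ k ∈ range (2*n+1), (-1 : ZMod p)^k * hF p k
      = ∑ b ∈ range n, ((2*b+1+1:ℕ) : ZMod p)⁻¹ :=
        parity_swap (fun j => ((j+1:ℕ) : ZMod p)⁻¹) n
    _ = eF p n := by
        simp only [eF]

noncomputable def hR (p k : ℕ) : ZMod (p^3) := ∑ j ∈ Finset.range k, ((j+1:ℕ) : ZMod (p^3))⁻¹
noncomputable def qR (p k : ℕ) : ZMod (p^3) := ∑ j ∈ Finset.range k, (((j+1:ℕ) : ZMod (p^3))⁻¹)^2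
noncomputable def eR (p k : ℕ) : ZMod (p^3) := (2 : ZMod (p^3))⁻¹ * ((hR p k)^2 - qR p k)
noncomputable def yR (p k : ℕ) : ZMod (p^3) :=
  -(p : ZMod (p^3)) * hR p k + (p : ZMod (p^3))^2 * eR p k
noncomputable def uR (p k : ℕ) : ZMod (p^3) :=
  ∏ j ∈ Finset.range k, (1 - (p : ZMod (p^3)) * ((j+1:ℕ) : ZMod (p^3))⁻¹)

lemma hp3_lemma (p : ℕ) : ((p : ZMod (p^3)))^3 = 0 := by
  rw [← Nat.cast_pow, ZMod.natCast_self]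

lemma hR_succ (p k : ℕ) : hR p (k+1) = hR p k + ((k+1:ℕ) : ZMod (p^3))⁻¹ := by
  simp only [hR]; rw [Finset.sum_range_succ]

lemma qR_succ (p k : ℕ) : qR p (k+1) = qR p k + (((k+1:ℕ) : ZMod (p^3))⁻¹)^2 := by
  simp only [qR]; rw [Finset.sum_range_succ]

lemma uR_succ (p k : ℕ) : uR p (k+1) = uR p k * (1 - (p : ZMod (p^3)) * ((k+1:ℕ) : ZMod (p^3))⁻¹) := by
  simp only [uR]; rw [Finset.prod_range_succ]

lemma uR_two (p : ℕ) : ∀ k, 2 * uR p k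
    = 2 - 2*(p : ZMod (p^3))*hR p k + (p : ZMod (p^3))^2*((hR p k)^2 - qR p k) := by
  intro k
  induction k with
  | zero => norm_num [uR, hR, qR]
  | succ k ih =>
    rw [uR_succ, hR_succ, qR_succ]
    set P : ZMod (p^3) := (p : ZMod (p^3)) with hP
    set S : ZMod (p^3) := hR p k
    set Q : ZMod (p^3) := qR p k
    set x : ZMod (p^3) := ((k+1:ℕ) : ZMod (p^3))⁻¹
    have key : (2 - 2*P*S + P^2*(S^2-Q))*(1-P*x)
        = 2 - 2*P*(S+x) + P^2*((S+x)^2-(Q+x^2)) + P^3*(-(x*(S^2-Q))) := by ring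
    calc 2 * (uR p k * (1 - P*x)) = (2 * uR p k) * (1-P*x) := by ring
      _ = (2 - 2*P*S + P^2*(S^2-Q))*(1-P*x) := by rw [ih]
      _ = 2 - 2*P*(S+x) + P^2*((S+x)^2-(Q+x^2)) + P^3*(-(x*(S^2-Q))) := key
      _ = 2 - 2*P*(S+x) + P^2*((S+x)^2-(Q+x^2)) := by rw [hP, hp3_lemma]; ring

lemma two_unit (p : ℕ) (hp : p.Prime) (hp2 : p ≠ 2) :
    (2 : ZMod (p^3)) * (2 : ZMod (p^3))⁻¹ = 1 := by
  have hcop : Nat.Coprime 2 (p^3) :=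
    Nat.Coprime.pow_right 3 ((Nat.coprime_primes Nat.prime_two hp).mpr (fun h => hp2 h.symm))
  have := ZMod.coe_mul_inv_eq_one (n := p^3) 2 hcop
  simpa using this

lemma uR_eq (p : ℕ) (hp : p.Prime) (hp2 : p ≠ 2) (k : ℕ) : uR p k = 1 + yR p k := by
  have h2 := two_unit p hp hp2
  have h2' : (2 : ZMod (p^3))⁻¹ * 2 = 1 := by rw [mul_comm]; exact h2
  have e1 : uR p k = (2 : ZMod (p^3))⁻¹ * (2 * uR p k) := by
    rw [← mul_assoc, h2', one_mul]
  rw [e1, uR_two]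
  simp only [yR, eR]
  linear_combination (1 - (p : ZMod (p^3))*hR p k) * h2'

lemma yR_sq (p k : ℕ) : (yR p k)^2 = (p : ZMod (p^3))^2 * (hR p k)^2 := by
  have key : (yR p k)^2 = (p : ZMod (p^3))^2*(hR p k)^2
      + (p : ZMod (p^3))^3 * ((p : ZMod (p^3))*(eR p k)^2 - 2*hR p k*eR p k) := by
    simp only [yR]; ring
  rw [key, hp3_lemma]; ring

lemma yR_cube (p k : ℕ) : (yR p k)^3 = 0 := by
  have key : (yR p k)^3 = (p : ZMod (p^3))^3 * (-(hR p k)^3 + 3*(p : ZMod (p^3))*(hR p k)^2*eR p k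
      - 3*(p : ZMod (p^3))^2*hR p k*(eR p k)^2 + (p : ZMod (p^3))^3*(eR p k)^3) := by
    simp only [yR]; ring
  rw [key, hp3_lemma]; ring

lemma choose_eq_cg (p : ℕ) (hp : p.Prime) : ∀ k, k < p →
    ((p-1).choose k : ZMod (p^3)) = (-1)^k * uR p k := by
  intro k
  induction k with
  | zero => intro _; simp [uR]
  | succ k ih =>
    intro hk1
    have hk : k < p := by omega
    have hC := ih hk
    have hnd : ¬ p ∣ (k+1) := fun hd => by have := Nat.le_of_dvd (by omega) hd; omega
    have hcop : Nat.Coprime (k+1) (p^3) :=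
      Nat.Coprime.pow_right 3 (Nat.coprime_comm.mp ((Nat.Prime.coprime_iff_not_dvd hp).mpr hnd))
    have hunit : ((k+1:ℕ) : ZMod (p^3)) * ((k+1:ℕ) : ZMod (p^3))⁻¹ = 1 :=
      ZMod.coe_mul_inv_eq_one (k+1) hcop
    have hnat := Nat.choose_succ_right_eq (p-1) k
    have hcast : ((p-1).choose (k+1) : ZMod (p^3)) * ((k+1:ℕ) : ZMod (p^3))
        = ((p-1).choose k : ZMod (p^3)) * ((p-1-k : ℕ) : ZMod (p^3)) := by
      exact_mod_cast congrArg (Nat.cast : ℕ → ZMod (p^3)) hnat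
    have hsub : ((p-1-k : ℕ) : ZMod (p^3)) = (p : ZMod (p^3)) - ((k+1:ℕ) : ZMod (p^3)) := by
      rw [show p-1-k = p - (k+1) by omega, Nat.cast_sub (by omega)]
    calc ((p-1).choose (k+1) : ZMod (p^3))
        = (((p-1).choose (k+1) : ZMod (p^3)) * ((k+1:ℕ) : ZMod (p^3))) * ((k+1:ℕ) : ZMod (p^3))⁻¹ := by
          rw [mul_assoc, hunit, mul_one]
      _ = ((p-1).choose k : ZMod (p^3))
            * (((p : ZMod (p^3)) - ((k+1:ℕ) : ZMod (p^3))) * ((k+1:ℕ) : ZMod (p^3))⁻¹) := by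
          rw [hcast, hsub]; ring
      _ = ((-1)^k * uR p k) * (-(1 - (p : ZMod (p^3)) * ((k+1:ℕ) : ZMod (p^3))⁻¹)) := by
          rw [hC]
          congr 1
          linear_combination (-1 : ZMod (p^3)) * hunit
      _ = (-1)^(k+1) * uR p (k+1) := by
          rw [uR_succ]; ring

noncomputable def φC (p : ℕ) : ZMod (p^3) →+* ZMod p :=
  ZMod.castHom (dvd_pow_self p (by norm_num)) (ZMod p)

lemma phi_inv (p : ℕ) (hp : p.Prime) (m : ℕ) (h1 : 0 < m) (h2 : m < p) :
    φC p ((m : ZMod (p^3))⁻¹) = ((m : ZMod p))⁻¹ := by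
  haveI : Fact p.Prime := ⟨hp⟩
  have hnd : ¬ p ∣ m := fun hd => by have := Nat.le_of_dvd h1 hd; omega
  have hcop : Nat.Coprime m (p^3) :=
    Nat.Coprime.pow_right 3 (Nat.coprime_comm.mp ((Nat.Prime.coprime_iff_not_dvd hp).mpr hnd))
  have hu : (m : ZMod (p^3)) * (m : ZMod (p^3))⁻¹ = 1 := ZMod.coe_mul_inv_eq_one m hcop
  have h := congrArg (φC p) hu
  rw [map_mul, map_natCast, map_one] at h
  exact eq_inv_of_mul_eq_one_right h

lemma phi_hR (p : ℕ) (hp : p.Prime) (k : ℕ) (hk : k < p) : φC p (hR p k) = hF p k := by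
  simp only [hR, hF, map_sum]
  apply Finset.sum_congr rfl
  intro j hj
  have := Finset.mem_range.mp hj
  exact phi_inv p hp (j+1) (by omega) (by omega)

lemma cg_val_cast (p : ℕ) (hp : p.Prime) (x : ZMod (p^3)) : ((x.val : ℕ) : ZMod (p^3)) = x := by
  haveI : NeZero (p^3) := ⟨pow_ne_zero 3 hp.pos.ne'⟩
  rw [ZMod.natCast_val, ZMod.cast_id]

lemma red1 (p : ℕ) (hp : p.Prime) (x : ZMod (p^3)) (h : (p : ZMod (p^3)) * x = 0) :
    φC p x = 0 := by
  have hx := cg_val_cast p hp x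
  rw [← hx, ← Nat.cast_mul] at h
  have hd : p^3 ∣ p * x.val := (ZMod.natCast_eq_zero_iff _ _).mp h
  have hd2 : p ∣ x.val := by
    have h' : p * p^2 ∣ p * x.val := by rw [show p*p^2 = p^3 by ring]; exact hd
    exact dvd_trans (dvd_pow_self p (by norm_num)) ((Nat.mul_dvd_mul_iff_left hp.pos).mp h')
  rw [← hx, map_natCast]
  exact (ZMod.natCast_eq_zero_iff _ _).mpr hd2

lemma red2 (p : ℕ) (hp : p.Prime) (x : ZMod (p^3)) (h : φC p x = 0) :
    (p : ZMod (p^3))^2 * x = 0 := by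
  have hx := cg_val_cast p hp x
  rw [← hx, map_natCast] at h
  obtain ⟨m, hm⟩ := (ZMod.natCast_eq_zero_iff _ _).mp h
  rw [← hx, hm]
  have e1 : ((p : ZMod (p^3)))^2 * ((p*m : ℕ) : ZMod (p^3)) = ((p^3 : ℕ) : ZMod (p^3)) * (m : ZMod (p^3)) := by
    push_cast; ring
  rw [e1, ZMod.natCast_self, zero_mul]
theorem cai_granville (p : ℕ) (hp : p.Prime) (h5 : 5 ≤ p) (a : ℕ) (ha : 1 ≤ a) :
    (∑ k ∈ Finset.range p, (-1 : ℤ) ^ ((a - 1) * k) * ((p - 1).choose k : ℤ) ^ a)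
      ≡ 2 ^ (a * (p - 1)) [ZMOD (p : ℤ) ^ 3] := by
  haveI : Fact p.Prime := ⟨hp⟩
  have hp2 : p ≠ 2 := by omega
  obtain ⟨n, hn⟩ : Odd p := hp.odd_of_ne_two hp2
  -- Fermat quotient q
  have h2F : (2 : ZMod p) ≠ 0 := by
    have := cg_cast_ne p 2 (by omega) (by omega); simpa using this
  have hferm : (2 : ZMod p)^(p-1) = 1 := ZMod.pow_card_sub_one_eq_one h2F
  have h1le : (1:ℕ) ≤ 2^(p-1) := Nat.one_le_two_pow
  have hdvd : p ∣ 2^(p-1) - 1 := by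
    have hc : ((2^(p-1) - 1 : ℕ) : ZMod p) = 0 := by
      rw [Nat.cast_sub h1le]
      push_cast
      rw [hferm]; ring
    exact (ZMod.natCast_eq_zero_iff _ _).mp hc
  obtain ⟨q, hq⟩ := hdvd
  have hq' : 2^(p-1) = p*q + 1 := by omega
  -- pass to ZMod (p^3)
  rw [show ((p:ℤ))^3 = ((p^3 : ℕ) : ℤ) by push_cast; ring]
  rw [← ZMod.intCast_eq_intCast_iff]
  push_cast
  have hp3 := hp3_lemma p
  have hpq3 : ((p : ZMod (p^3)) * (q : ZMod (p^3)))^3 = 0 := by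
    have e : ((p:ZMod (p^3)) * (q:ZMod (p^3)))^3 = (p:ZMod (p^3))^3 * (q:ZMod (p^3))^3 := by ring
    rw [e, hp3, zero_mul]
  have h2R : (2 : ZMod (p^3))^(p-1) = 1 + (p : ZMod (p^3)) * (q : ZMod (p^3)) := by
    have e : ((2^(p-1) : ℕ) : ZMod (p^3)) = (((p*q+1) : ℕ) : ZMod (p^3)) := by rw [hq']
    push_cast at e
    rw [e]; ring
  have hsumC : ∑ k ∈ Finset.range p, ((p-1).choose k : ZMod (p^3)) = (2 : ZMod (p^3))^(p-1) := by
    have h := congrArg (Nat.cast : ℕ → ZMod (p^3)) (Nat.sum_range_choose (p-1))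
    rw [show p-1+1 = p by omega] at h
    push_cast at h
    exact h
  have hgeom : ∑ k ∈ Finset.range p, (-1 : ZMod (p^3))^k = 1 := by
    rw [neg_one_geom_sum, if_neg (Nat.not_even_iff_odd.mpr ⟨n, hn⟩)]
  have hPhi : ∑ k ∈ Finset.range p, (-1 : ZMod (p^3))^k * yR p k
      = (p : ZMod (p^3)) * (q : ZMod (p^3)) := by
    have e1 : ∑ k ∈ Finset.range p, ((p-1).choose k : ZMod (p^3))
        = ∑ k ∈ Finset.range p, (-1 : ZMod (p^3))^k * (1 + yR p k) :=
      Finset.sum_congr rfl fun k hk => by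
        rw [choose_eq_cg p hp k (Finset.mem_range.mp hk), uR_eq p hp hp2]
    have e2 : ∑ k ∈ Finset.range p, (-1 : ZMod (p^3))^k * (1 + yR p k)
        = (∑ k ∈ Finset.range p, (-1 : ZMod (p^3))^k)
          + ∑ k ∈ Finset.range p, (-1 : ZMod (p^3))^k * yR p k := by
      rw [← Finset.sum_add_distrib]
      exact Finset.sum_congr rfl fun k _ => by ring
    have h := hsumC
    rw [e1, e2, hgeom, h2R] at h
    linear_combination h
  set BR := ∑ k ∈ Finset.range p, (-1 : ZMod (p^3))^k * (hR p k)^2 with hBRdef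
  set AR := ∑ k ∈ Finset.range p, (-1 : ZMod (p^3))^k * hR p k with hARdef
  set ER := ∑ k ∈ Finset.range p, (-1 : ZMod (p^3))^k * eR p k with hERdef
  -- q mod p in terms of eF
  have hqe : (q : ZMod p) = - eF p n := by
    have hAR : ∑ k ∈ Finset.range p, (-1 : ZMod (p^3))^k * yR p k
        = -(p:ZMod (p^3)) * AR + (p:ZMod (p^3))^2 * ER := by
      rw [hARdef, hERdef, Finset.mul_sum, Finset.mul_sum, ← Finset.sum_add_distrib]
      exact Finset.sum_congr rfl fun k _ => by simp only [yR]; ring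
    have hzero : (p : ZMod (p^3)) * ((q : ZMod (p^3)) + AR - (p:ZMod (p^3))*ER) = 0 := by
      have h := hPhi
      rw [hAR] at h
      linear_combination -h
    have hphiz := red1 p hp _ hzero
    rw [map_sub, map_add, map_mul, map_natCast, map_natCast, ZMod.natCast_self] at hphiz
    have hφA : φC p AR = ∑ k ∈ Finset.range p, (-1 : ZMod p)^k * hF p k := by
      rw [hARdef, map_sum]
      exact Finset.sum_congr rfl fun k hk => by
        rw [map_mul, map_pow, map_neg, map_one, phi_hR p hp k (Finset.mem_range.mp hk)]
    rw [hφA, AF_eq p n hn] at hphiz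
    linear_combination hphiz
  have hBF : φC p BR = (eF p n)^2 := by
    have hφ : φC p BR = ∑ k ∈ Finset.range p, (-1 : ZMod p)^k * (hF p k)^2 := by
      rw [hBRdef, map_sum]
      exact Finset.sum_congr rfl fun k hk => by
        rw [map_mul, map_pow, map_pow, map_neg, map_one, phi_hR p hp k (Finset.mem_range.mp hk)]
    rw [hφ, BF_eq p n hp hn, tF_eq_zero p n hp hn h5]
    ring
  have hkey : (p : ZMod (p^3))^2 * BR = (p : ZMod (p^3))^2 * (q : ZMod (p^3))^2 := by
    have hz : φC p (BR - (q : ZMod (p^3))^2) = 0 := by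
      rw [map_sub, map_pow, map_natCast, hBF, hqe]; ring
    have h := red2 p hp _ hz
    linear_combination h
  -- expand LHS
  have hLHS : ∑ k ∈ Finset.range p, (-1 : ZMod (p^3))^((a-1)*k) * ((p-1).choose k : ZMod (p^3))^a
      = 1 + (a : ZMod (p^3)) * ((p:ZMod (p^3)) * (q:ZMod (p^3)))
        + ((a.choose 2 : ℕ) : ZMod (p^3)) * ((p:ZMod (p^3))^2 * BR) := by
    have e1 : ∀ k ∈ Finset.range p,
        (-1 : ZMod (p^3))^((a-1)*k) * ((p-1).choose k : ZMod (p^3))^a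
        = (-1:ZMod (p^3))^k * (1 + (a:ZMod (p^3))*yR p k
            + ((a.choose 2 : ℕ):ZMod (p^3))*((p:ZMod (p^3))^2*(hR p k)^2)) := by
      intro k hk
      have hkp := Finset.mem_range.mp hk
      rw [choose_eq_cg p hp k hkp, uR_eq p hp hp2, mul_pow, ← pow_mul,
        pow_expand (yR p k) (yR_cube p k) a, yR_sq, ← mul_assoc]
      have hsign : (-1 : ZMod (p^3))^((a-1)*k) * (-1 : ZMod (p^3))^(k*a)
          = (-1 : ZMod (p^3))^k := by
        rw [← pow_add, show (a-1)*k + k*a = 2*(k*(a-1)) + k by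
          cases a with
          | zero => omega
          | succ b => simp only [Nat.add_sub_cancel]; ring]
        rw [pow_add, pow_mul]
        norm_num
      rw [hsign]
    rw [Finset.sum_congr rfl e1]
    have e2 : ∑ k ∈ Finset.range p, (-1:ZMod (p^3))^k * (1 + (a:ZMod (p^3))*yR p k
          + ((a.choose 2 : ℕ):ZMod (p^3))*((p:ZMod (p^3))^2*(hR p k)^2))
        = (∑ k ∈ Finset.range p, (-1:ZMod (p^3))^k)
          + (a:ZMod (p^3)) * (∑ k ∈ Finset.range p, (-1:ZMod (p^3))^k * yR p k)
          + ((a.choose 2 : ℕ):ZMod (p^3)) * ((p:ZMod (p^3))^2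
              * (∑ k ∈ Finset.range p, (-1:ZMod (p^3))^k * (hR p k)^2)) := by
      simp only [Finset.mul_sum, ← Finset.sum_add_distrib]
      exact Finset.sum_congr rfl fun k _ => by ring
    rw [e2, hgeom, hPhi]
  -- expand RHS
  have hRHS : (2 : ZMod (p^3))^(a*(p-1))
      = 1 + (a:ZMod (p^3))*((p:ZMod (p^3))*(q:ZMod (p^3)))
        + ((a.choose 2:ℕ):ZMod (p^3))*((p:ZMod (p^3))^2*(q:ZMod (p^3))^2) := by
    rw [show a*(p-1) = (p-1)*a by ring, pow_mul, h2R, pow_expand _ hpq3 a]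
    ring
  rw [hLHS, hRHS, hkey]
end

section
/- For every prime p ≥ 5 and every odd integer n with 3 ≤ n ≤ p-2, Σ_{k=1}^{(p-1)/2} 1/k^n ≡ -(2(2^{n-1}-1)/n) B_{p-n} (mod p), as a congruence of p-integral rationals. -/
/-!
Congruences are read in `ℚ_[p]` as `‖x - y‖ ≤ p⁻¹`. By Fermat, `1 / k ^ n ≡ k ^ m` for
`m = p - 1 - n`, so the sum becomes the power sum `∑_{k < (p + 1) / 2} k ^ m`. Faulhaber's formula
writes `(m + 1)` times it as `B_{m+1}((p + 1) / 2) - B_{m+1}`. The Bernoulli polynomial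
`B_{m+1}` has `p`-integral coefficients by von Staudt–Clausen (as `m + 1 < p - 1`), so its value at
`(p + 1) / 2 ≡ 1 / 2` is congruent to `B_{m+1}(1 / 2) = (2 ^ (-m) - 1) B_{m+1}`. Finally
`m + 1 ≡ -n` and `2 ^ (-m) ≡ 2 ^ n`, again by Fermat.
-/

open Finset

section Ultrametric

variable {E : Type*} [SeminormedAddGroup E] [IsUltrametricDist E]

theorem IsUltrametricDist.norm_add_le_of_le {a b : E} {c : ℝ} (ha : ‖a‖ ≤ c) (hb : ‖b‖ ≤ c) :
    ‖a + b‖ ≤ c :=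
  (norm_add_le_max a b).trans (max_le ha hb)

theorem IsUltrametricDist.norm_sub_le_of_le {a b : E} {c : ℝ} (ha : ‖a‖ ≤ c) (hb : ‖b‖ ≤ c) :
    ‖a - b‖ ≤ c := by
  rw [sub_eq_add_neg]
  exact norm_add_le_of_le ha (by rwa [norm_neg])

variable {R : Type*} [SeminormedCommRing R] [NormOneClass R] [IsUltrametricDist R]

theorem IsUltrametricDist.norm_pow_sub_pow_le {x y : R} (hx : ‖x‖ ≤ 1) (hy : ‖y‖ ≤ 1) (e : ℕ) :
    ‖x ^ e - y ^ e‖ ≤ ‖x - y‖ := by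
  have hpow {z : R} (hz : ‖z‖ ≤ 1) (i : ℕ) : ‖z ^ i‖ ≤ 1 :=
    (_root_.norm_pow_le z i).trans (pow_le_one₀ (norm_nonneg z) hz)
  have hgeom : ‖∑ i ∈ range e, x ^ i * y ^ (e - 1 - i)‖ ≤ 1 :=
    norm_sum_le_of_forall_le_of_nonneg zero_le_one fun i _ ↦
      (norm_mul_le _ _).trans <| mul_le_one₀ (hpow hx i) (norm_nonneg _) (hpow hy _)
  rw [← geom_sum₂_mul]
  exact (norm_mul_le _ _).trans (mul_le_of_le_one_left (norm_nonneg _) hgeom)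

theorem Polynomial.norm_eval_sub_eval_le {P : Polynomial R} (hP : ∀ i, ‖P.coeff i‖ ≤ 1)
    {x y : R} (hx : ‖x‖ ≤ 1) (hy : ‖y‖ ≤ 1) : ‖P.eval x - P.eval y‖ ≤ ‖x - y‖ := by
  rw [eval_eq_sum_range, eval_eq_sum_range, ← sum_sub_distrib]
  refine IsUltrametricDist.norm_sum_le_of_forall_le_of_nonneg (norm_nonneg _) fun i _ ↦ ?_
  rw [← mul_sub]
  exact (norm_mul_le_of_le (hP i) (IsUltrametricDist.norm_pow_sub_pow_le hx hy i)).trans_eq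
    (one_mul _)

end Ultrametric

theorem Polynomial.bernoulli_eval_half (k : ℕ) :
    (Polynomial.bernoulli k).eval 2⁻¹ = (2 / (2 : ℚ) ^ k - 1) * _root_.bernoulli k := by
  have h := bernoulliFun_eval_half k
  rw [bernoulliFun, eval_map, show (2⁻¹ : ℝ) = algebraMap ℚ ℝ 2⁻¹ by simp, eval₂_at_apply,
    eq_ratCast] at h
  apply Rat.cast_injective (α := ℝ)
  rw [h]
  push_cast
  rfl

namespace Padic

variable {p : ℕ} [hp : Fact p.Prime]

theorem norm_natCast_eq_one_of_prime_ne {q : ℕ} (hq : q.Prime) (hqp : q ≠ p) :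
    ‖(q : ℚ_[p])‖ = 1 :=
  norm_natCast_eq_one_iff.2 <| (Nat.coprime_primes hp.out hq).2 hqp.symm

theorem norm_two_eq_one (hp2 : p ≠ 2) : ‖(2 : ℚ_[p])‖ = 1 := by
  exact_mod_cast norm_natCast_eq_one_of_prime_ne Nat.prime_two (Ne.symm hp2)

theorem norm_bernoulli_le_one {i : ℕ} (hi : i < p - 1) : ‖(bernoulli i : ℚ_[p])‖ ≤ 1 := by
  obtain ⟨k, rfl | rfl⟩ := Nat.even_or_odd' i
  · rcases Nat.eq_zero_or_pos k with rfl | hk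
    · simp
    obtain ⟨z, hz⟩ := Bernoulli.vonStaudt_clausen k
    rw [eq_sub_of_add_eq hz.symm, Rat.cast_sub, Rat.cast_intCast, Rat.cast_sum]
    refine IsUltrametricDist.norm_sub_le_of_le (norm_int_le_one z) ?_
    refine IsUltrametricDist.norm_sum_le_of_forall_le_of_nonneg zero_le_one fun q hq ↦ ?_
    obtain ⟨hq, hdvd⟩ := (mem_filter.1 hq).2
    have hqp : q ≠ p := by
      rintro rfl
      exact absurd (Nat.le_of_dvd (by omega) hdvd) (by omega)
    rw [Rat.cast_div, Rat.cast_one, Rat.cast_natCast, norm_div, norm_one,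
      norm_natCast_eq_one_of_prime_ne hq hqp, div_one]
  · rcases Nat.eq_zero_or_pos k with rfl | hk
    · simp [bernoulli_one, norm_two_eq_one (p := p) (by omega)]
    · rw [bernoulli_eq_zero_of_odd (odd_two_mul_add_one k) (by omega)]
      simp

theorem norm_le_inv_iff_norm_lt_one (x : ℚ_[p]) : ‖x‖ ≤ (p : ℝ)⁻¹ ↔ ‖x‖ < 1 := by
  simpa using norm_le_pow_iff_norm_lt_pow_add_one x (-1)

theorem norm_natCast_pow_sub_one_sub_one_le {k : ℕ} (hk : p.Coprime k) :
    ‖(k : ℚ_[p]) ^ (p - 1) - 1‖ ≤ (p : ℝ)⁻¹ := by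
  have hdvd := Int.prime_dvd_pow_sub_one hp.out (Nat.isCoprime_iff_coprime.2 hk.symm)
  rw [norm_le_inv_iff_norm_lt_one]
  exact_mod_cast norm_intCast_lt_one_iff.2 hdvd

theorem norm_inv_pow_sub_pow_le {k n m : ℕ} (hk : p.Coprime k) (hnm : n + m = p - 1) :
    ‖((k : ℚ_[p]) ^ n)⁻¹ - (k : ℚ_[p]) ^ m‖ ≤ (p : ℝ)⁻¹ := by
  have hk1 : ‖(k : ℚ_[p])‖ = 1 := norm_natCast_eq_one_iff.2 hk
  have hk0 : (k : ℚ_[p]) ≠ 0 := norm_ne_zero_iff.1 (by simp [hk1])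
  have : ((k : ℚ_[p]) ^ n)⁻¹ - (k : ℚ_[p]) ^ m
      = -((k : ℚ_[p]) ^ n)⁻¹ * ((k : ℚ_[p]) ^ (p - 1) - 1) := by
    rw [← hnm, pow_add]
    field_simp
    ring
  rw [this, norm_mul, norm_neg, norm_inv, norm_pow, hk1, one_pow, inv_one, one_mul]
  exact norm_natCast_pow_sub_one_sub_one_le hk

theorem norm_sum_Icc_inv_pow_sub_sum_range_pow_le {N n m : ℕ} (hN : N < p) (hm : m ≠ 0)
    (hnm : n + m = p - 1) :
    ‖∑ k ∈ Icc 1 N, ((k : ℚ_[p]) ^ n)⁻¹ - ∑ k ∈ range (N + 1), (k : ℚ_[p]) ^ m‖ ≤ (p : ℝ)⁻¹ := by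
  rw [range_eq_Ico, sum_eq_sum_Ico_succ_bot N.succ_pos, Nat.cast_zero, zero_pow hm, zero_add,
    Nat.succ_eq_add_one, zero_add, Ico_add_one_right_eq_Icc, ← sum_sub_distrib]
  refine IsUltrametricDist.norm_sum_le_of_forall_le_of_nonneg (by positivity) fun k hk ↦ ?_
  obtain ⟨hk1, hkN⟩ := mem_Icc.1 hk
  exact norm_inv_pow_sub_pow_le (Nat.coprime_of_lt_prime (by omega) (by omega) hp.out) hnm

theorem norm_natCast_half_succ_sub_inv_two_le (hp2 : p ≠ 2) :
    ‖(((p - 1) / 2 + 1 : ℕ) : ℚ_[p]) - 2⁻¹‖ ≤ (p : ℝ)⁻¹ := by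
  have hodd : 2 * ((p - 1) / 2 + 1) = p + 1 := by
    obtain ⟨j, rfl⟩ := hp.out.eq_two_or_odd'.resolve_left hp2
    omega
  have h2 := norm_two_eq_one hp2
  have h20 : (2 : ℚ_[p]) ≠ 0 := norm_ne_zero_iff.1 (by simp [h2])
  have : (((p - 1) / 2 + 1 : ℕ) : ℚ_[p]) - 2⁻¹ = p * 2⁻¹ := by
    have hc : (2 : ℚ_[p]) * (((p - 1) / 2 + 1 : ℕ) : ℚ_[p]) = p + 1 := by exact_mod_cast hodd
    field_simp
    linear_combination hc
  rw [this, norm_mul, norm_inv, h2, inv_one, mul_one, norm_p]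

theorem norm_coeff_map_bernoulli_le_one {r : ℕ} (hr : r < p - 1) (i : ℕ) :
    ‖((Polynomial.bernoulli r).map (algebraMap ℚ ℚ_[p])).coeff i‖ ≤ 1 := by
  rw [Polynomial.coeff_map, Polynomial.coeff_bernoulli]
  split_ifs
  · rw [eq_ratCast, Rat.cast_mul, Rat.cast_natCast, norm_mul]
    exact mul_le_one₀ (norm_bernoulli_le_one (by omega)) (norm_nonneg _)
      (IsUltrametricDist.norm_natCast_le_one _ _)
  · simp

theorem norm_mul_sum_range_pow_sub_le {m : ℕ} (hm : m + 2 < p) :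
    ‖(m + 1 : ℚ_[p]) * ∑ k ∈ range ((p - 1) / 2 + 1), (k : ℚ_[p]) ^ m
      - (2 / 2 ^ (m + 1) - 2) * (bernoulli (m + 1) : ℚ_[p])‖ ≤ (p : ℝ)⁻¹ := by
  set P := (Polynomial.bernoulli (m + 1)).map (algebraMap ℚ ℚ_[p])
  have hcast (q : ℚ) :
      (((Polynomial.bernoulli (m + 1)).eval q : ℚ) : ℚ_[p]) = P.eval (q : ℚ_[p]) := by
    rw [Polynomial.eval_map, ← eq_ratCast (algebraMap ℚ ℚ_[p]) q, Polynomial.eval₂_at_apply,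
      eq_ratCast]
  have hsum : (m + 1 : ℚ_[p]) * ∑ k ∈ range ((p - 1) / 2 + 1), (k : ℚ_[p]) ^ m
      = P.eval (((p - 1) / 2 + 1 : ℕ) : ℚ_[p]) - bernoulli (m + 1) := by
    have := congrArg (Rat.cast : ℚ → ℚ_[p])
      (Polynomial.sum_range_pow_eq_bernoulli_sub ((p - 1) / 2 + 1) m)
    simpa only [Rat.cast_mul, Rat.cast_sub, hcast, Rat.cast_natCast, Rat.cast_add, Rat.cast_one,
      Rat.cast_sum, Rat.cast_pow, Nat.succ_eq_add_one] using this
  have hhalf : P.eval 2⁻¹ = (2 / 2 ^ (m + 1) - 1) * (bernoulli (m + 1) : ℚ_[p]) := by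
    have := congrArg (Rat.cast : ℚ → ℚ_[p]) (Polynomial.bernoulli_eval_half (m + 1))
    rw [hcast] at this
    push_cast at this
    exact this
  have h2 : ‖(2⁻¹ : ℚ_[p])‖ ≤ 1 := by rw [norm_inv, norm_two_eq_one (by omega), inv_one]
  rw [hsum, show ∀ a : ℚ_[p], a - bernoulli (m + 1) - (2 / 2 ^ (m + 1) - 2) * bernoulli (m + 1)
      = a - P.eval 2⁻¹ by intro a; rw [hhalf]; ring]
  exact (Polynomial.norm_eval_sub_eval_le (norm_coeff_map_bernoulli_le_one (by omega))
    (IsUltrametricDist.norm_natCast_le_one _ _) h2).trans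
    (norm_natCast_half_succ_sub_inv_two_le (by omega))

theorem norm_natCast_mul_sum_range_pow_add_le {n m : ℕ} (hn : 2 ≤ n) (hnm : n + m + 1 = p) :
    ‖(n : ℚ_[p]) * ∑ k ∈ range ((p - 1) / 2 + 1), (k : ℚ_[p]) ^ m
      + 2 * (2 ^ (n - 1) - 1) * (bernoulli (m + 1) : ℚ_[p])‖ ≤ (p : ℝ)⁻¹ := by
  set s := ∑ k ∈ range ((p - 1) / 2 + 1), (k : ℚ_[p]) ^ m
  set B : ℚ_[p] := (bernoulli (m + 1) : ℚ_[p])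
  have hs : ‖s‖ ≤ 1 := IsUltrametricDist.norm_sum_le_of_forall_le_of_nonneg zero_le_one
    fun k _ ↦ by
      rw [norm_pow]; exact pow_le_one₀ (norm_nonneg _) (IsUltrametricDist.norm_natCast_le_one _ _)
  have hB : ‖B‖ ≤ 1 := norm_bernoulli_le_one (by omega)
  have hFermat : ‖(2 : ℚ_[p]) ^ (p - 1) - 1‖ ≤ (p : ℝ)⁻¹ := by
    exact_mod_cast norm_natCast_pow_sub_one_sub_one_le (k := 2)
      (Nat.coprime_of_lt_prime two_ne_zero (by omega) hp.out)
  have h2 : ‖(2 : ℚ_[p]) / 2 ^ (m + 1)‖ = 1 := by simp [norm_two_eq_one (p := p) (by omega)]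
  have key : (n : ℚ_[p]) * s + 2 * (2 ^ (n - 1) - 1) * B
      = p * s - ((m + 1 : ℚ_[p]) * s - (2 / 2 ^ (m + 1) - 2) * B)
        + 2 / 2 ^ (m + 1) * (2 ^ (p - 1) - 1) * B := by
    have hpc : (p : ℚ_[p]) = n + m + 1 := by exact_mod_cast hnm.symm
    rw [hpc, show p - 1 = (n - 1) + (m + 1) by omega, pow_add]
    field_simp
    ring
  rw [key]
  refine IsUltrametricDist.norm_add_le_of_le (IsUltrametricDist.norm_sub_le_of_le ?_
    (norm_mul_sum_range_pow_sub_le (by omega))) ?_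
  · rw [norm_mul, norm_p]
    exact mul_le_of_le_one_right (by positivity) hs
  · rw [mul_assoc, norm_mul, h2, one_mul]
    exact (norm_mul_le_of_le hFermat hB).trans_eq (mul_one _)

end Padic

theorem half_power_sum_odd_general (p : ℕ) [Fact p.Prime] (n : ℕ)
    (h3 : 3 ≤ n) (hnp : n ≤ p - 2) :
    ‖(((∑ k ∈ Finset.Icc 1 ((p - 1) / 2), (1 : ℚ) / (k : ℚ) ^ n)
        - (-(2 * (2 ^ (n - 1) - 1) / (n : ℚ)) * bernoulli (p - n)) : ℚ) : ℚ_[p])‖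
      ≤ (p : ℝ) ^ (-(1 : ℤ)) := by
  obtain ⟨m, hm⟩ : ∃ m, p - n = m + 1 := ⟨p - n - 1, by omega⟩
  push_cast
  simp_rw [one_div, hm]
  set x := ∑ k ∈ Icc 1 ((p - 1) / 2), ((k : ℚ_[p]) ^ n)⁻¹
  set s := ∑ k ∈ range ((p - 1) / 2 + 1), (k : ℚ_[p]) ^ m
  set B : ℚ_[p] := (bernoulli (m + 1) : ℚ_[p])
  have hn : ‖(n : ℚ_[p])‖ = 1 :=
    Padic.norm_natCast_eq_one_iff.2 (Nat.coprime_of_lt_prime (by omega) (by omega) Fact.out)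
  have key : (n : ℚ_[p]) * (x - -(2 * (2 ^ (n - 1) - 1) / n) * B)
      = n * (x - s) + (n * s + 2 * (2 ^ (n - 1) - 1) * B) := by
    have hn0 : (n : ℚ_[p]) ≠ 0 := norm_ne_zero_iff.1 (by simp [hn])
    field_simp
    ring
  rw [zpow_neg_one, ← one_mul ‖_‖, ← hn, ← norm_mul, key]
  refine IsUltrametricDist.norm_add_le_of_le ?_
    (Padic.norm_natCast_mul_sum_range_pow_add_le (by omega) (by omega))
  rw [norm_mul, hn, one_mul]
  exact Padic.norm_sum_Icc_inv_pow_sub_sum_range_pow_le (by omega) (by omega) (by omega)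

theorem half_power_sum_odd (p : ℕ) [Fact p.Prime] (h5 : 5 ≤ p) (n : ℕ)
    (hno : Odd n) (h3 : 3 ≤ n) (hnp : n ≤ p - 2) :
    ‖(((∑ k ∈ Finset.Icc 1 ((p - 1) / 2), (1 : ℚ) / (k : ℚ) ^ n)
        - (-(2 * (2 ^ (n - 1) - 1) / (n : ℚ)) * bernoulli (p - n)) : ℚ) : ℚ_[p])‖
      ≤ (p : ℝ) ^ (-(1 : ℤ)) :=
  half_power_sum_odd_general p n h3 hnp
end

section
/- Let p be a prime and 1 ≤ r < p. Then (-1)^r C(p-1,r) ≡ 1 - p Σ_{k=1}^r 1/k + p^2 Σ_{1 ≤ j < k ≤ r} 1/(jk) - p^3 Σ_{1 ≤ i < j < k ≤ r} 1/(ijk) (mod p^4), as a congruence of p-integral rationals. -/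
/-!
Since `(-1)^r C(p-1, r) = ∏_{k=1}^r (1 - p/k)`, the right-hand side of the congruence is the part
of degree at most 3 in `p` of this product. Writing `E_r` for the difference, adding the factor
`1 - p/(r+1)` gives `E_{r+1} = E_r (1 - p/(r+1)) + p^4 e_3(1, …, 1/r) / (r+1)`, where `e_3` is the
third elementary symmetric function. For `k < p` the numbers `1/k` are `p`-adic units, so the
ultrametric inequality keeps `‖E_r‖ ≤ ‖p‖^4` along the induction.
-/

open Finset

section Truncation

variable {R : Type*} [CommRing R] (t : R) (y : ℕ → R)

def esymm1 (r : ℕ) : R := ∑ k ∈ Icc 1 r, y k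

def esymm2 (r : ℕ) : R := ∑ k ∈ Icc 1 r, ∑ j ∈ Icc 1 (k - 1), y j * y k

def esymm3 (r : ℕ) : R :=
  ∑ k ∈ Icc 1 r, ∑ j ∈ Icc 1 (k - 1), ∑ i ∈ Icc 1 (j - 1), y i * y j * y k

-- The terms of degree at most 3 in `t` of `∏ k ∈ Icc 1 r, (1 - t * y k)`.
def truncatedProd (r : ℕ) : R :=
  1 - t * esymm1 y r + t ^ 2 * esymm2 y r - t ^ 3 * esymm3 y r

lemma esymm1_succ (r : ℕ) : esymm1 y (r + 1) = esymm1 y r + y (r + 1) := by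
  rw [esymm1, sum_Icc_succ_top (by omega), esymm1]

lemma esymm2_succ (r : ℕ) : esymm2 y (r + 1) = esymm2 y r + esymm1 y r * y (r + 1) := by
  rw [esymm2, sum_Icc_succ_top (by omega), esymm2, esymm1, Nat.add_sub_cancel, sum_mul]

lemma esymm3_succ (r : ℕ) : esymm3 y (r + 1) = esymm3 y r + esymm2 y r * y (r + 1) := by
  rw [esymm3, sum_Icc_succ_top (by omega), esymm3, esymm2, Nat.add_sub_cancel, sum_mul]
  simp_rw [sum_mul]

lemma truncatedProd_succ (r : ℕ) :
    truncatedProd t y (r + 1) =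
      truncatedProd t y r * (1 - t * y (r + 1)) - t ^ 4 * esymm3 y r * y (r + 1) := by
  simp only [truncatedProd, esymm1_succ, esymm2_succ, esymm3_succ]
  ring

lemma prod_one_sub_mul_sub_truncatedProd_succ (r : ℕ) :
    ∏ k ∈ Icc 1 (r + 1), (1 - t * y k) - truncatedProd t y (r + 1) =
      (∏ k ∈ Icc 1 r, (1 - t * y k) - truncatedProd t y r) * (1 - t * y (r + 1))
        + t ^ 4 * esymm3 y r * y (r + 1) := by
  rw [prod_Icc_succ_top (by omega), truncatedProd_succ]
  ring

end Truncation

section Ultrametric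

variable {R : Type*} [NormedCommRing R] [IsUltrametricDist R] {y : ℕ → R} {r : ℕ}

lemma norm_esymm3_le_one (hy : ∀ k ∈ Icc 1 r, ‖y k‖ ≤ 1) : ‖esymm3 y r‖ ≤ 1 := by
  have hy' : ∀ k ∈ Icc 1 r, ∀ j ∈ Icc 1 (k - 1), j ∈ Icc 1 r := fun k hk j hj => by
    simp only [mem_Icc] at *; omega
  refine IsUltrametricDist.norm_sum_le_of_forall_le_of_nonneg zero_le_one fun k hk => ?_
  refine IsUltrametricDist.norm_sum_le_of_forall_le_of_nonneg zero_le_one fun j hj => ?_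
  refine IsUltrametricDist.norm_sum_le_of_forall_le_of_nonneg zero_le_one fun i hi => ?_
  have hj' := hy' k hk j hj
  calc ‖y i * y j * y k‖ ≤ ‖y i‖ * ‖y j‖ * ‖y k‖ := norm_mul₃_le
    _ ≤ 1 * 1 * 1 := by
      gcongr
      exacts [hy i (hy' j hj' i hi), hy j hj', hy k hk]
    _ = 1 := by norm_num

theorem norm_prod_one_sub_mul_sub_truncatedProd_le [NormOneClass R] {t : R} (ht : ‖t‖ ≤ 1)
    (hy : ∀ k ∈ Icc 1 r, ‖y k‖ ≤ 1) :
    ‖∏ k ∈ Icc 1 r, (1 - t * y k) - truncatedProd t y r‖ ≤ ‖t‖ ^ 4 := by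
  induction r with
  | zero => simp [truncatedProd, esymm1, esymm2, esymm3]
  | succ r ih =>
    have hy' : ∀ k ∈ Icc 1 r, ‖y k‖ ≤ 1 := fun k hk => hy k (Icc_subset_Icc_right (by omega) hk)
    have hyr : ‖y (r + 1)‖ ≤ 1 := hy (r + 1) (by simp)
    have hfactor : ‖1 - t * y (r + 1)‖ ≤ 1 := by
      rw [sub_eq_add_neg]
      refine (IsUltrametricDist.norm_add_le_max _ _).trans (max_le norm_one.le ?_)
      calc ‖-(t * y (r + 1))‖ = ‖t * y (r + 1)‖ := norm_neg _
        _ ≤ ‖t‖ * ‖y (r + 1)‖ := norm_mul_le _ _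
        _ ≤ 1 := mul_le_one₀ ht (norm_nonneg _) hyr
    rw [prod_one_sub_mul_sub_truncatedProd_succ]
    refine (IsUltrametricDist.norm_add_le_max _ _).trans (max_le ?_ ?_)
    · calc _ ≤ _ := norm_mul_le _ _
        _ ≤ ‖t‖ ^ 4 * 1 := by gcongr; exact ih hy'
        _ = ‖t‖ ^ 4 := mul_one _
    · calc _ ≤ ‖t‖ ^ 4 * ‖esymm3 y r‖ * ‖y (r + 1)‖ := by
            refine (norm_mul_le _ _).trans ?_
            gcongr
            exact (norm_mul_le _ _).trans (by gcongr; exact norm_pow_le _ _)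
        _ ≤ ‖t‖ ^ 4 * 1 * 1 := by gcongr; exact norm_esymm3_le_one hy'
        _ = ‖t‖ ^ 4 := by ring

end Ultrametric

theorem neg_one_pow_mul_choose_eq_prod {K : Type*} [Field K] [CharZero K] (n r : ℕ) :
    (-1 : K) ^ r * n.choose r = ∏ k ∈ Icc 1 r, (1 - (n + 1 : K) * (1 / k)) := by
  induction r with
  | zero => simp
  | succ r ih =>
    have hrec : (n.choose (r + 1) : K) * (r + 1) = n.choose r * (n - r) := by
      rcases le_or_gt r n with hrn | hnr
      · rw [← Nat.cast_sub hrn]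
        exact_mod_cast Nat.choose_succ_right_eq n r
      · simp [Nat.choose_eq_zero_of_lt hnr, Nat.choose_eq_zero_of_lt (hnr.trans r.lt_succ_self)]
    rw [prod_Icc_succ_top (by omega), ← ih]
    have : (r + 1 : K) ≠ 0 := Nat.cast_add_one_ne_zero r
    field_simp
    push_cast
    linear_combination -(-1 : K) ^ r * hrec

theorem choose_expansion_general (p : ℕ) [Fact p.Prime] (r : ℕ) (hrp : r < p) :
    ‖((((-1 : ℚ) ^ r * ((p - 1).choose r : ℚ)
        - (1 - (p : ℚ) * ∑ k ∈ Finset.Icc 1 r, (1 : ℚ) / k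
          + (p : ℚ) ^ 2 * ∑ k ∈ Finset.Icc 1 r, ∑ j ∈ Finset.Icc 1 (k - 1), (1 : ℚ) / (j * k)
          - (p : ℚ) ^ 3 * ∑ k ∈ Finset.Icc 1 r, ∑ j ∈ Finset.Icc 1 (k - 1),
              ∑ i ∈ Finset.Icc 1 (j - 1), (1 : ℚ) / (i * j * k))) : ℚ) : ℚ_[p])‖
      ≤ (p : ℝ) ^ (-(4 : ℤ)) := by
  have hp := (Fact.out : p.Prime)
  have hchoose := neg_one_pow_mul_choose_eq_prod (K := ℚ_[p]) (p - 1) r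
  rw [Nat.cast_pred hp.pos, sub_add_cancel] at hchoose
  have hy : ∀ k ∈ Icc 1 r, ‖1 / (k : ℚ_[p])‖ ≤ 1 := fun k hk => by
    have hk := mem_Icc.mp hk
    have hcop : p.Coprime k := Nat.coprime_of_lt_prime (by omega) (by omega) hp
    rw [norm_div, norm_one, Padic.norm_natCast_eq_one_iff.mpr hcop, div_one]
  have hbound := norm_prod_one_sub_mul_sub_truncatedProd_le Padic.norm_p_lt_one.le hy
  rw [show (p : ℝ) ^ (-(4 : ℤ)) = ‖(p : ℚ_[p])‖ ^ 4 by rw [← norm_pow, Padic.norm_p_pow]; rfl]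
  refine le_of_eq_of_le (congrArg norm ?_) hbound
  push_cast
  rw [hchoose]
  simp only [truncatedProd, esymm1, esymm2, esymm3, one_div_mul_one_div]

theorem choose_expansion (p : ℕ) [Fact p.Prime] (r : ℕ) (hr1 : 1 ≤ r) (hrp : r < p) :
    ‖((((-1 : ℚ) ^ r * ((p - 1).choose r : ℚ)
        - (1 - (p : ℚ) * ∑ k ∈ Finset.Icc 1 r, (1 : ℚ) / k
          + (p : ℚ) ^ 2 * ∑ k ∈ Finset.Icc 1 r, ∑ j ∈ Finset.Icc 1 (k - 1), (1 : ℚ) / (j * k)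
          - (p : ℚ) ^ 3 * ∑ k ∈ Finset.Icc 1 r, ∑ j ∈ Finset.Icc 1 (k - 1),
              ∑ i ∈ Finset.Icc 1 (j - 1), (1 : ℚ) / (i * j * k))) : ℚ) : ℚ_[p])‖
      ≤ (p : ℝ) ^ (-(4 : ℤ)) :=
  choose_expansion_general p r hrp
end

section
/- For every positive integer a, 2^{2a} - Σ_{k=0}^{2} (-1)^{(a-1)k} C(2,k)^a ≡ 9 a (a-1) (mod 81), and moreover (27/16) a(a-1)(a+4) ≡ 0 (mod 81) in the 3-integral rationals; consequently Σ_{k=0}^{2} (-1)^{(a-1)k} C(2,k)^a ≡ 2^{2a} + (a(a-1)(3a-4)/48)·27 (mod 81). -/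
instance : Fact (Nat.Prime 3) := ⟨by norm_num⟩

lemma key3 (a : ℕ) : ((4:ℤ)^a + (-2)^a - 2 ≡ 9 * a * (a - 1) [ZMOD 81]) := by
  induction a using Nat.strong_induction_on with
  | _ a ih =>
    by_cases h : a < 27
    · interval_cases a <;> decide
    · obtain ⟨b, rfl⟩ : ∃ b, a = b + 27 := ⟨a - 27, by omega⟩
      have hb := ih b (by omega)
      have h4 : (4:ℤ)^(b+27) ≡ 4^b [ZMOD 81] := by
        rw [pow_add]
        calc (4:ℤ)^b * 4^27 ≡ 4^b * 1 [ZMOD 81] :=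
              Int.ModEq.mul_left _ (by decide)
          _ = 4^b := mul_one _
      have h2 : ((-2):ℤ)^(b+27) ≡ (-2)^b [ZMOD 81] := by
        rw [pow_add]
        calc ((-2):ℤ)^b * (-2)^27 ≡ (-2)^b * 1 [ZMOD 81] :=
              Int.ModEq.mul_left _ (by decide)
          _ = (-2)^b := mul_one _
      have h5 : 9 * (b:ℤ) * (b - 1) ≡ 9 * ((b:ℕ)+27 : ℕ) * (((b:ℕ)+27 : ℕ) - 1) [ZMOD 81] := by
        rw [Int.modEq_iff_dvd]
        exact ⟨6*b + 78, by push_cast; ring⟩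
      exact ((h4.add h2).sub_right 2).trans (hb.trans h5)

lemma norm_aux3 (n : ℤ) (q : ℚ) (hq : q = 81 * (n / 16)) :
    ‖((q : ℚ) : ℚ_[3])‖ ≤ (81 : ℝ)⁻¹ := by
  subst hq
  push_cast
  have h81 : ‖(81 : ℚ_[3])‖ = (81 : ℝ)⁻¹ := by
    have : (81 : ℚ_[3]) = (3:ℚ_[3])^4 := by norm_num
    rw [this, norm_pow]
    have hp : ‖(3 : ℚ_[3])‖ = ((3:ℕ) : ℝ)⁻¹ := Padic.norm_p
    rw [hp]; norm_num
  have h16 : ‖(16 : ℚ_[3])‖ = 1 := by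
    have hle : ‖((16:ℤ) : ℚ_[3])‖ ≤ 1 := Padic.norm_int_le_one _
    have hlt : ¬ ‖((16:ℤ) : ℚ_[3])‖ < 1 := by
      rw [Padic.norm_intCast_lt_one_iff]; decide
    push_cast at hle hlt
    linarith [lt_or_eq_of_le hle]
  rw [norm_mul, norm_div, h81, h16]
  have := Padic.norm_int_le_one (p := 3) n
  push_cast at this
  rw [div_one]
  nlinarith [norm_nonneg ((n:ℚ_[3]))]

theorem p_eq_three_case (a : ℕ) (ha : 1 ≤ a) :
    ((2 ^ (2 * a) - ∑ k ∈ Finset.range 3, (-1 : ℤ) ^ ((a - 1) * k) * (Nat.choose 2 k : ℤ) ^ a)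
        ≡ 9 * a * (a - 1) [ZMOD 81])
    ∧ ‖(((27 / 16) * (a : ℚ) * (a - 1) * (a + 4) : ℚ) : ℚ_[3])‖ ≤ (81 : ℝ)⁻¹
    ∧ ‖(((∑ k ∈ Finset.range 3, (-1 : ℚ) ^ ((a - 1) * k) * (Nat.choose 2 k : ℚ) ^ a)
        - (2 ^ (2 * a) + ((a : ℚ) * (a - 1) * (3 * a - 4) / 48) * 27) : ℚ) : ℚ_[3])‖
      ≤ (81 : ℝ)⁻¹ := by
  obtain ⟨b, rfl⟩ : ∃ b, a = b + 1 := ⟨a - 1, by omega⟩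
  have hz : ∀ x : ZMod 3, (x+1)*x*(x+5) = 0 := by decide
  have hdvd : (3:ℤ) ∣ ((b:ℤ)+1) * (b:ℤ) * ((b:ℤ)+5) :=
    (ZMod.intCast_zmod_eq_zero_iff_dvd _ 3).mp (by push_cast; exact hz _)
  obtain ⟨m, hm⟩ := hdvd
  have key := key3 (b+1)
  refine ⟨?_, ?_, ?_⟩
  · have e : ((2:ℤ) ^ (2 * (b+1)) -
        ∑ k ∈ Finset.range 3, (-1 : ℤ) ^ ((b+1 - 1) * k) * (Nat.choose 2 k : ℤ) ^ (b+1))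
        = 4^(b+1) + (-2)^(b+1) - 2 := by
      rw [Finset.sum_range_succ, Finset.sum_range_succ, Finset.sum_range_one]
      have e2 : ((-2):ℤ)^(b+1) = -((-1:ℤ)^b * 2^(b+1)) := by
        have h : ((-2):ℤ) = -1 * 2 := by norm_num
        rw [h, mul_pow, pow_succ]; ring
      have e3 : ((-1):ℤ)^(b*2) = 1 := by rw [mul_comm, pow_mul]; norm_num
      have e4 : (2:ℤ)^(2*(b+1)) = 4^(b+1) := by rw [pow_mul]; norm_num
      simp only [Nat.add_sub_cancel, Nat.choose_zero_right, Nat.choose_self,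
        Nat.choose_one_right, Nat.cast_one, Nat.cast_ofNat, mul_zero, pow_zero,
        one_mul, mul_one, one_pow]
      rw [e2, e3, e4]; ring
    rw [e]
    exact key
  · refine norm_aux3 m _ ?_
    have hmQ : ((b:ℚ)+1) * (b:ℚ) * ((b:ℚ)+5) = 3 * m := by exact_mod_cast hm
    push_cast
    linear_combination (27/16) * hmQ
  · obtain ⟨K, hK⟩ := Int.ModEq.dvd key
    have hKQ : 9*((b:ℚ)+1)*(((b:ℚ)+1)-1) - ((4:ℚ)^(b+1)+(-2)^(b+1)-2) = 81*K := by
      exact_mod_cast congrArg (fun z : ℤ => (z : ℚ)) hK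
    have hmQ : ((b:ℚ)+1) * (b:ℚ) * ((b:ℚ)+5) = 3 * m := by exact_mod_cast hm
    refine norm_aux3 (16*K - m) _ ?_
    rw [Finset.sum_range_succ, Finset.sum_range_succ, Finset.sum_range_one]
    have e2 : ((-2):ℚ)^(b+1) = -((-1:ℚ)^b * 2^(b+1)) := by
      have h : ((-2):ℚ) = -1 * 2 := by norm_num
      rw [h, mul_pow, pow_succ]; ring
    have e3 : ((-1):ℚ)^(b*2) = 1 := by rw [mul_comm, pow_mul]; norm_num
    have e4 : (2:ℚ)^(2*(b+1)) = 4^(b+1) := by rw [pow_mul]; norm_num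
    simp only [Nat.add_sub_cancel, Nat.choose_zero_right, Nat.choose_self,
      Nat.choose_one_right, Nat.cast_one, Nat.cast_ofNat, mul_zero, pow_zero,
      one_mul, mul_one, one_pow]
    rw [e3]
    push_cast
    linear_combination hKQ + e2 - e4 - (27/16) * hmQ
end
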